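/- For all ζ₁, ζ₂ ∈ ℂ with |ζ₁| ≤ 1/8 and |ζ₂| ≤ 1/8, one has | 1 − (1 − ζ₁·conj(ζ₂))/(1 − conj(ζ₁)·ζ₂) | = | 2·Im(ζ₁·conj(ζ₂)) | / |1 − conj(ζ₁)·ζ₂| ≤ (1/2)·|ζ₁ − ζ₂|. -/

import Mathlib

/-!
Writing `w = conj ζ₁ * ζ₂`, the quantity equals `(conj w - w) / (1 - w)` and `conj w - w = -2i Im w`,
which gives the identity. For the bound, `Im (ζ₁ * conj ζ₂) = Im (ζ₁ * conj (ζ₂ - ζ₁))` because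
`ζ₁ * conj ζ₁` is real, so the numerator is at most `2 ‖ζ₁‖ ‖ζ₁ - ζ₂‖`, while the denominator is at
least `1 - ‖ζ₁‖ ‖ζ₂‖`. With `‖ζᵢ‖ ≤ 1/8` the resulting constant is `16/63 ≤ 1/2`.
-/

open ComplexConjugate

namespace Complex

theorem norm_one_sub_div_one_sub_conj (z : ℂ) (hz : conj z ≠ 1) :
    ‖1 - (1 - z) / (1 - conj z)‖ = |2 * z.im| / ‖1 - conj z‖ := by
  have hden : 1 - conj z ≠ 0 := sub_ne_zero.mpr hz.symm
  have hsub : 1 - (1 - z) / (1 - conj z) = (z - conj z) / (1 - conj z) := by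
    field_simp
    ring
  rw [hsub, norm_div, sub_conj, norm_mul, norm_I, mul_one, norm_real, Real.norm_eq_abs]

theorem abs_im_mul_conj_le (ζ₁ ζ₂ : ℂ) : |(ζ₁ * conj ζ₂).im| ≤ ‖ζ₁‖ * ‖ζ₁ - ζ₂‖ := by
  have him : (ζ₁ * conj ζ₂).im = (ζ₁ * conj (ζ₂ - ζ₁)).im := by
    simp only [map_sub, mul_sub, sub_im, mul_conj, ofReal_im, sub_zero]
  calc |(ζ₁ * conj ζ₂).im| = |(ζ₁ * conj (ζ₂ - ζ₁)).im| := by rw [him]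
    _ ≤ ‖ζ₁ * conj (ζ₂ - ζ₁)‖ := abs_im_le_norm _
    _ = ‖ζ₁‖ * ‖ζ₁ - ζ₂‖ := by rw [norm_mul, norm_conj, norm_sub_rev]

theorem one_sub_norm_mul_le_norm_one_sub_conj_mul (ζ₁ ζ₂ : ℂ) :
    1 - ‖ζ₁‖ * ‖ζ₂‖ ≤ ‖1 - conj ζ₁ * ζ₂‖ := by
  simpa [norm_mul, norm_conj] using norm_sub_norm_le (1 : ℂ) (conj ζ₁ * ζ₂)

theorem abs_two_im_mul_conj_div_le {r : ℝ} (hr : r < 1) (ζ₁ ζ₂ : ℂ) (h₁ : ‖ζ₁‖ ≤ r)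
    (h₂ : ‖ζ₂‖ ≤ r) :
    |2 * (ζ₁ * conj ζ₂).im| / ‖1 - conj ζ₁ * ζ₂‖ ≤ 2 * r / (1 - r ^ 2) * ‖ζ₁ - ζ₂‖ := by
  have hr₀ : 0 ≤ r := (norm_nonneg _).trans h₁
  have hprod : ‖ζ₁‖ * ‖ζ₂‖ ≤ r ^ 2 := by
    rw [sq]; exact mul_le_mul h₁ h₂ (norm_nonneg _) hr₀
  have hden : 1 - r ^ 2 ≤ ‖1 - conj ζ₁ * ζ₂‖ :=
    (sub_le_sub_left hprod 1).trans (one_sub_norm_mul_le_norm_one_sub_conj_mul ζ₁ ζ₂)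
  have hden₀ : 0 < 1 - r ^ 2 := by nlinarith
  have hnum : |2 * (ζ₁ * conj ζ₂).im| ≤ 2 * r * ‖ζ₁ - ζ₂‖ := by
    rw [abs_mul, abs_two, mul_assoc]
    gcongr
    exact (abs_im_mul_conj_le ζ₁ ζ₂).trans (by gcongr)
  calc |2 * (ζ₁ * conj ζ₂).im| / ‖1 - conj ζ₁ * ζ₂‖
      ≤ 2 * r * ‖ζ₁ - ζ₂‖ / (1 - r ^ 2) := div_le_div₀ (by positivity) hnum hden₀ hden
    _ = 2 * r / (1 - r ^ 2) * ‖ζ₁ - ζ₂‖ := by ring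

end Complex

open Complex in
theorem stmt_15 (ζ₁ ζ₂ : ℂ) (h1 : ‖ζ₁‖ ≤ 1 / 8) (h2 : ‖ζ₂‖ ≤ 1 / 8) :
    ‖1 - (1 - ζ₁ * (starRingEnd ℂ) ζ₂) / (1 - (starRingEnd ℂ) ζ₁ * ζ₂)‖ =
      |2 * (ζ₁ * (starRingEnd ℂ) ζ₂).im| / ‖1 - (starRingEnd ℂ) ζ₁ * ζ₂‖ ∧
    ‖1 - (1 - ζ₁ * (starRingEnd ℂ) ζ₂) / (1 - (starRingEnd ℂ) ζ₁ * ζ₂)‖ ≤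
      (1 / 2) * ‖ζ₁ - ζ₂‖ := by
  have hconj : conj (ζ₁ * conj ζ₂) = conj ζ₁ * ζ₂ := by rw [map_mul, conj_conj]
  have hne : conj ζ₁ * ζ₂ ≠ 1 := by
    intro h
    have := one_sub_norm_mul_le_norm_one_sub_conj_mul ζ₁ ζ₂
    rw [h, sub_self, norm_zero] at this
    nlinarith [norm_nonneg ζ₁, norm_nonneg ζ₂]
  have hid := norm_one_sub_div_one_sub_conj (ζ₁ * conj ζ₂) (hconj ▸ hne)
  rw [hconj] at hid
  refine ⟨hid, hid ▸ (abs_two_im_mul_conj_div_le (by norm_num) ζ₁ ζ₂ h1 h2).trans ?_⟩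
  exact mul_le_mul_of_nonneg_right (by norm_num) (norm_nonneg _)
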